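/- For every n ≥ 1, c₁(8n−1) ≡ c_{μ₂}(n) (mod 2), where c₁(m) is the coefficient of q^{m+1} in 1/((q)_∞)^{24} and c_{μ₂}(n) is the n-th coefficient of 1/((q)_∞)^3. -/

import Mathlib

open PowerSeries Finset

/-- The infinite product `∏_{n ≥ 1} (1 - q^(m*n))`, i.e. `(q^m)_∞`, as a formal power
series: its `N`-th coefficient equals that of the (stabilized) partial product. -/
noncomputable def qPochInf (R : Type) [CommRing R] (m : ℕ) : PowerSeries R :=
  PowerSeries.mk fun N =>
    PowerSeries.coeff (R := R) N (∏ n ∈ Finset.Icc 1 N, (1 - PowerSeries.X ^ (m * n)))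

/-! Over `𝔽₂` we have `(q)_∞^{-24} = ((q)_∞^{-3})^8`, and in characteristic `p` the `p^k`-th
power of a power series `∑ aₙ qⁿ` is `∑ aₙ^{p^k} q^{p^k n}`; over `𝔽₂` the coefficients are
fixed by Frobenius, so the `8n`-th coefficient of the left side is the `n`-th of `(q)_∞^{-3}`. -/

namespace PowerSeries

theorem map_iterateFrobenius_expand {R : Type*} [CommRing R] (p : ℕ) [ExpChar R p]
    (f : R⟦X⟧) (k : ℕ) :
    map (iterateFrobenius R p k) (expand (p ^ k) (pow_ne_zero k (expChar_ne_zero R p)) f) =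
      f ^ p ^ k :=
  MvPowerSeries.map_iterateFrobenius_expand p (expChar_ne_zero R p) f k

theorem coeff_pow_expChar_pow_mul {R : Type*} [CommRing R] (p : ℕ) [ExpChar R p]
    (f : R⟦X⟧) (k m : ℕ) : coeff (p ^ k * m) (f ^ p ^ k) = coeff m f ^ p ^ k := by
  rw [← map_iterateFrobenius_expand, coeff_map, coeff_expand_mul, iterateFrobenius_def]

protected theorem inv_pow {k : Type*} [Field k] (φ : k⟦X⟧) (n : ℕ) : (φ ^ n)⁻¹ = φ⁻¹ ^ n := by
  induction n with
  | zero => simp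
  | succ n ih => rw [pow_succ, PowerSeries.mul_inv_rev, ih, pow_succ']

end PowerSeries

theorem c1_eight_n_sub_one_congr_mu2_general (n : ℕ) :
    PowerSeries.coeff (R := ZMod 2) (8 * n) (((qPochInf (ZMod 2) 1) ^ 24)⁻¹) =
      PowerSeries.coeff (R := ZMod 2) n (((qPochInf (ZMod 2) 1) ^ 3)⁻¹) := by
  rw [show 24 = 3 * 2 ^ 3 by rfl, pow_mul, PowerSeries.inv_pow, show 8 * n = 2 ^ 3 * n by rfl,
    coeff_pow_expChar_pow_mul, ZMod.pow_card_pow]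

/-- c₁(8n−1) ≡ c_{μ₂}(n) (mod 2): the coefficient of q^(8n) in ((q)_∞)^(−24) is
congruent mod 2 to the coefficient of q^n in ((q)_∞)^(−3). -/
theorem c1_eight_n_sub_one_congr_mu2 (n : ℕ) (hn : 1 ≤ n) :
    PowerSeries.coeff (R := ZMod 2) (8 * n) (((qPochInf (ZMod 2) 1) ^ 24)⁻¹) =
      PowerSeries.coeff (R := ZMod 2) n (((qPochInf (ZMod 2) 1) ^ 3)⁻¹) :=
  c1_eight_n_sub_one_congr_mu2_general n
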